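/- arXiv:0706.1526 — 3 statements merged into one kernel-verified Lean document; each statement's English description precedes it below -/
import Mathlib

section
/- Fix natural numbers Δ and k. Suppose that every finite nonempty outerplanar graph with maximum degree at most Δ contains a k-vertex. Then every finite outerplanar graph G with maximum degree at most Δ satisfies ind(G²) ≤ k, i.e., every nonempty induced subgraph of G² has a vertex of degree at most k in that subgraph. -/
open SimpleGraph

/-- The square `G²` of a simple graph `G`: two distinct vertices are adjacent iff
they are adjacent in `G` or have a common neighbor in `G`. -/
def SimpleGraph.square {V : Type*} (G : SimpleGraph V) : SimpleGraph V where
  Adj u v := u ≠ v ∧ (G.Adj u v ∨ ∃ w, G.Adj u w ∧ G.Adj w v)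
  symm := ⟨by
    rintro u v ⟨hne, h | ⟨w, h1, h2⟩⟩
    · exact ⟨hne.symm, Or.inl h.symm⟩
    · exact ⟨hne.symm, Or.inr ⟨w, h2.symm, h1.symm⟩⟩⟩
  loopless := ⟨fun u h => h.1 rfl⟩

/-- A finite simple graph is outerplanar iff it has a one-page book embedding:
a linear order (here realized by an injection into `ℕ`) on its vertices such that
no two edges "cross", i.e. there are no vertices `a < c < b < d` with both
`{a,b}` and `{c,d}` edges. -/
def SimpleGraph.IsOuterplanar {V : Type*} (G : SimpleGraph V) : Prop :=
  ∃ f : V → ℕ, Function.Injective f ∧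
    ∀ a b c d : V, G.Adj a b → G.Adj c d →
      ¬(f a < f c ∧ f c < f b ∧ f b < f d)

/-- The degree of a vertex, as the cardinality of its neighbor set. -/
noncomputable def SimpleGraph.deg {V : Type*} (G : SimpleGraph V) (v : V) : ℕ :=
  (G.neighborSet v).ncard

/-- The maximum degree `Δ` of a finite graph. -/
noncomputable def SimpleGraph.maxDeg {V : Type*} [Fintype V] (G : SimpleGraph V) : ℕ :=
  Finset.univ.sup fun v => G.deg v

/-- The degree of `v` inside the subgraph of `G` induced by the vertex set `s`. -/
noncomputable def SimpleGraph.degIn {V : Type*} (G : SimpleGraph V) (s : Finset V) (v : V) : ℕ :=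
  {u | u ∈ s ∧ G.Adj v u}.ncard

/-- The inductiveness (degeneracy) of a finite graph: the maximum over all nonempty
induced subgraphs of the minimum degree of the induced subgraph. -/
noncomputable def SimpleGraph.inductiveness {V : Type*} [Fintype V]
    (G : SimpleGraph V) : ℕ :=
  Finset.univ.powerset.sup fun s =>
    if h : s.Nonempty then s.inf' h (G.degIn s) else 0

/-- A graph is chordal if every cycle of length at least 4 has a chord: two
vertices of the cycle, adjacent in the graph, whose joining edge is not an edge
of the cycle (i.e. they are nonconsecutive on the cycle). -/
def SimpleGraph.IsChordal {V : Type*} (G : SimpleGraph V) : Prop :=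
  ∀ ⦃v : V⦄ (w : G.Walk v v), w.IsCycle → 4 ≤ w.length →
    ∃ a b : V, a ∈ w.support ∧ b ∈ w.support ∧ G.Adj a b ∧ s(a, b) ∉ w.edges

/-- A finite graph is biconnected if it has at least 3 vertices, is connected,
and deleting any single vertex leaves it connected. -/
def SimpleGraph.Biconnected {V : Type*} [Fintype V] (G : SimpleGraph V) : Prop :=
  3 ≤ Fintype.card V ∧ G.Connected ∧
    ∀ v : V, ((G.induce {u | u ≠ v}).Connected)

/-- `G` is `k`-choosable: for every assignment of lists of exactly `k` colors to
the vertices there is a proper coloring choosing each vertex's color from its list. -/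
def SimpleGraph.Choosable {V : Type*} (G : SimpleGraph V) (k : ℕ) : Prop :=
  ∀ L : V → Finset ℕ, (∀ v, (L v).card = k) →
    ∃ c : V → ℕ, (∀ v, c v ∈ L v) ∧ ∀ u v, G.Adj u v → c u ≠ c v

/-- `F₄`: the 6-vertex graph obtained from the triangle `0 1 2` by adding, for each
edge of the triangle, a new vertex (`3 = y₀₁`, `4 = y₁₂`, `5 = y₀₂`) adjacent to
exactly the two endpoints of that edge. -/
def F4 : SimpleGraph (Fin 6) :=
  SimpleGraph.fromEdgeSet
    {s(0, 1), s(1, 2), s(0, 2), s(3, 0), s(3, 1), s(4, 1), s(4, 2), s(5, 0), s(5, 2)}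

/-- `F₆`: the 12-vertex graph obtained from `F₄` by adding, for each of the six edges
`xᵢyᵢⱼ` between a triangle vertex and an added vertex, a new vertex adjacent to
exactly the two endpoints of that edge (vertices `6,…,11`). -/
def F6 : SimpleGraph (Fin 12) :=
  SimpleGraph.fromEdgeSet
    {s(0, 1), s(1, 2), s(0, 2), s(3, 0), s(3, 1), s(4, 1), s(4, 2), s(5, 0), s(5, 2),
     s(6, 0), s(6, 3), s(7, 1), s(7, 3), s(8, 1), s(8, 4), s(9, 2), s(9, 4),
     s(10, 0), s(10, 5), s(11, 2), s(11, 5)}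

/-- The rigid ladder `RL n`.  For even `n = 2k` it has vertices `u₁,…,u_k,v₁,…,v_k`
and edges `uᵢvᵢ, uᵢuᵢ₊₁, uᵢvᵢ₊₁, vᵢvᵢ₊₁` (for `1 ≤ i ≤ k-1`) together with `u_k v_k`;
for odd `n` it is `RL (n+1)` with the vertex `u_{(n+1)/2}` deleted.  We use the zigzag
labelling `vᵢ ↦ 2i - 2`, `uᵢ ↦ 2i - 1` (under which deleting `u_{(n+1)/2} = n` from
`RL (n+1)` leaves exactly the labels `0,…,n-1`); under this labelling two vertices are
adjacent iff their labels differ by exactly 1 or 2. -/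
def rigidLadder (n : ℕ) : SimpleGraph (Fin n) where
  Adj a b := a ≠ b ∧ Nat.dist a.val b.val ≤ 2
  symm := ⟨by
    rintro a b ⟨h1, h2⟩
    exact ⟨h1.symm, by rwa [Nat.dist_comm]⟩⟩
  loopless := ⟨fun a h => h.1 rfl⟩

/-!
Induction on the number of vertices. Let `v` be a `k`-vertex of `G`. If `v ∈ s` we are done.
Otherwise delete `v` and join its (at most two) neighbours. The resulting graph is again
outerplanar with maximum degree at most `Δ`, and any two vertices at distance at most two in
`G` are still at distance at most two, so a vertex of `s` of small degree in the square of
the smaller graph has small degree in `G²` as well.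
-/

namespace SimpleGraph

variable {V : Type*}

lemma deg_le_of_maxDeg_le [Fintype V] {G : SimpleGraph V} {Δ : ℕ} (h : G.maxDeg ≤ Δ) (v : V) :
    G.deg v ≤ Δ :=
  (Finset.le_sup (Finset.mem_univ v)).trans h

lemma degIn_le_deg [Finite V] (G : SimpleGraph V) (s : Finset V) (v : V) :
    G.degIn s v ≤ G.deg v :=
  Set.ncard_le_ncard (fun _ hu => hu.2) (Set.toFinite _)

lemma eq_or_eq_or_eq_of_deg_le_two [Finite V] {G : SimpleGraph V} {v a b c : V}
    (hv : G.deg v ≤ 2) (ha : G.Adj v a) (hb : G.Adj v b) (hc : G.Adj v c) :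
    a = b ∨ a = c ∨ b = c := by
  by_contra! h
  obtain ⟨hab, hac, hbc⟩ := h
  have hsub : ({a, b, c} : Set V) ⊆ G.neighborSet v := by
    simp only [Set.insert_subset_iff, Set.singleton_subset_iff, mem_neighborSet]
    exact ⟨ha, hb, hc⟩
  have := Set.ncard_le_ncard hsub (Set.toFinite _)
  rw [Set.ncard_eq_three.mpr ⟨a, b, c, hab, hac, hbc, rfl⟩] at this
  exact absurd (this.trans hv) (by norm_num)

def suppressVertex (G : SimpleGraph V) (v : V) : SimpleGraph ({v}ᶜ : Set V) where
  Adj a b := a ≠ b ∧ (G.Adj a b ∨ G.Adj a v ∧ G.Adj v b)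
  symm := ⟨by
    rintro a b ⟨hne, h | ⟨hav, hvb⟩⟩
    · exact ⟨hne.symm, Or.inl h.symm⟩
    · exact ⟨hne.symm, Or.inr ⟨hvb.symm, hav.symm⟩⟩⟩
  loopless := ⟨fun _ h => h.1 rfl⟩

lemma square_induce_le_square_suppressVertex (G : SimpleGraph V) (v : V) :
    G.square.induce {v}ᶜ ≤ (G.suppressVertex v).square := by
  rintro a b ⟨hne, hab | ⟨m, ham, hmb⟩⟩
  all_goals replace hne : a ≠ b := Subtype.coe_ne_coe.mp hne
  · exact ⟨hne, Or.inl ⟨hne, Or.inl hab⟩⟩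
  by_cases hmv : m = v
  · rw [hmv] at ham hmb
    exact ⟨hne, Or.inl ⟨hne, Or.inr ⟨ham, hmb⟩⟩⟩
  · refine ⟨hne, Or.inr ⟨⟨m, hmv⟩, ⟨?_, Or.inl ham⟩, ⟨?_, Or.inl hmb⟩⟩⟩
    · exact fun h => ham.ne (congrArg Subtype.val h)
    · exact fun h => hmb.ne (congrArg Subtype.val h)

/-- Replacing `v` by the edge `u`–`w` never increases a degree: `w` takes the place of `v`
among the neighbours of `u`. -/
lemma deg_suppressVertex_le [Finite V] {G : SimpleGraph V} {v : V} (hv : G.deg v ≤ 2)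
    (u : ({v}ᶜ : Set V)) : (G.suppressVertex v).deg u ≤ G.deg u := by
  classical
  let g : ({v}ᶜ : Set V) → V := fun w => if G.Adj u w then w else v
  have hmaps : ∀ w ∈ (G.suppressVertex v).neighborSet u, g w ∈ G.neighborSet u := by
    rintro w ⟨-, huw | ⟨huv, -⟩⟩
    · simp [g, huw]
    · by_cases huw : G.Adj u w <;> simp [g, huw, huv]
  refine Set.ncard_le_ncard_of_injOn g hmaps ?_ (Set.toFinite _)
  rintro w₁ ⟨hu₁, h₁⟩ w₂ ⟨hu₂, h₂⟩ he
  by_cases a₁ : G.Adj u w₁ <;> by_cases a₂ : G.Adj u w₂ <;>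
    simp only [g, a₁, a₂, if_true, if_false] at he
  · exact Subtype.ext he
  · exact absurd he w₁.2
  · exact absurd he.symm w₂.2
  · obtain ⟨huv, hvw₁⟩ := h₁.resolve_left a₁
    obtain ⟨-, hvw₂⟩ := h₂.resolve_left a₂
    rcases eq_or_eq_or_eq_of_deg_le_two hv huv.symm hvw₁ hvw₂ with h | h | h
    · exact absurd (Subtype.ext h) hu₁
    · exact absurd (Subtype.ext h) hu₂
    · exact Subtype.ext h

lemma maxDeg_suppressVertex_le [Fintype V] {G : SimpleGraph V} {v : V}
    [Fintype ({v}ᶜ : Set V)] {Δ : ℕ} (hv : G.deg v ≤ 2) (hΔ : G.maxDeg ≤ Δ) :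
    (G.suppressVertex v).maxDeg ≤ Δ :=
  Finset.sup_le fun u _ => (deg_suppressVertex_le hv u).trans (deg_le_of_maxDeg_le hΔ u)

def IsBookEmbedding (G : SimpleGraph V) (f : V → ℕ) : Prop :=
  Function.Injective f ∧
    ∀ a b c d : V, G.Adj a b → G.Adj c d → ¬(f a < f c ∧ f c < f b ∧ f b < f d)

/-- An edge `xy` avoiding `v` that crosses the chord `u₁u₂` crosses the path `u₁ v u₂`. -/
lemma IsBookEmbedding.not_crosses_of_adj_of_adj {G : SimpleGraph V} {f : V → ℕ}
    (hf : G.IsBookEmbedding f) {v u₁ u₂ x y : V} (h₁ : G.Adj v u₁) (h₂ : G.Adj v u₂)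
    (hxy : G.Adj x y) (hx : v ≠ x) (hy : v ≠ y) :
    ¬(f u₁ < f x ∧ f x < f u₂ ∧ f u₂ < f y) ∧ ¬(f x < f u₁ ∧ f u₁ < f y ∧ f y < f u₂) := by
  have := hf.2 v u₂ x y h₂ hxy
  have := hf.2 u₁ v x y h₁.symm hxy
  have := hf.2 x y u₂ v hxy h₂.symm
  have := hf.2 v u₁ x y h₁ hxy
  have := hf.2 x y v u₂ hxy h₂
  have := hf.2 x y u₁ v hxy h₁.symm
  have := hf.1.ne hx
  have := hf.1.ne hy
  omega

lemma IsBookEmbedding.suppressVertex [Finite V] {G : SimpleGraph V} {f : V → ℕ}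
    (hf : G.IsBookEmbedding f) {v : V} (hv : G.deg v ≤ 2) :
    (G.suppressVertex v).IsBookEmbedding fun a => f a := by
  refine ⟨hf.1.comp Subtype.val_injective, ?_⟩
  rintro a b c d ⟨-, hab | ⟨hav, hvb⟩⟩ ⟨-, hcd | ⟨hcv, hvd⟩⟩ hcross
  · exact hf.2 a b c d hab hcd hcross
  · exact (hf.not_crosses_of_adj_of_adj hcv.symm hvd hab (Ne.symm a.2) (Ne.symm b.2)).2 hcross
  · exact (hf.not_crosses_of_adj_of_adj hav.symm hvb hcd (Ne.symm c.2) (Ne.symm d.2)).1 hcross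
  · -- `a`, `b`, `c` are three distinct neighbours of `v`
    obtain ⟨hac, hcb, hbd⟩ := hcross
    rcases eq_or_eq_or_eq_of_deg_le_two hv hav.symm hvb hcv.symm with h | h | h
    · exact (hac.trans hcb).ne (congrArg f h)
    · exact hac.ne (congrArg f h)
    · exact hcb.ne' (congrArg f h)

lemma IsOuterplanar.suppressVertex [Finite V] {G : SimpleGraph V} (hG : G.IsOuterplanar)
    {v : V} (hv : G.deg v ≤ 2) : (G.suppressVertex v).IsOuterplanar :=
  let ⟨_, hf⟩ := hG
  ⟨_, IsBookEmbedding.suppressVertex hf hv⟩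

lemma degIn_le_degIn_subtype {G : SimpleGraph V} {S : Set V} {H : SimpleGraph S}
    (hGH : G.induce S ≤ H) {s : Finset V} (hs : ↑s ⊆ S) [DecidablePred (· ∈ S)] (w : S) :
    G.degIn s w ≤ H.degIn (s.subtype (· ∈ S)) w := by
  have hsub : {u | u ∈ s ∧ G.Adj w u} ⊆
      Subtype.val '' {u | u ∈ s.subtype (· ∈ S) ∧ H.Adj w u} :=
    fun u ⟨hus, hwu⟩ => ⟨⟨u, hs hus⟩, ⟨Finset.mem_subtype.mpr hus, hGH hwu⟩, rfl⟩
  calc G.degIn s w ≤ (Subtype.val '' {u | u ∈ s.subtype (· ∈ S) ∧ H.Adj w u}).ncard :=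
        Set.ncard_le_ncard hsub (((s.subtype _).finite_toSet.subset fun _ hu => hu.1).image _)
    _ = H.degIn (s.subtype (· ∈ S)) w := Set.ncard_image_of_injective _ Subtype.val_injective

end SimpleGraph

/-- Fix `Δ, k`. If every finite nonempty outerplanar graph with
maximum degree at most `Δ` contains a `k`-vertex (a vertex of degree at most 2 in the
graph and degree at most `k` in its square), then every finite outerplanar graph `G`
with maximum degree at most `Δ` satisfies `ind(G²) ≤ k`: every nonempty induced
subgraph of `G²` has a vertex of degree at most `k` in that subgraph. -/
theorem stmt2 (Δ k : ℕ)
    (hyp : ∀ (W : Type) [Fintype W] (H : SimpleGraph W), Nonempty W →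
      H.IsOuterplanar → H.maxDeg ≤ Δ →
      ∃ v : W, H.deg v ≤ 2 ∧ H.square.deg v ≤ k)
    {V : Type} [Fintype V] (G : SimpleGraph V)
    (hout : G.IsOuterplanar) (hΔ : G.maxDeg ≤ Δ) :
    ∀ s : Finset V, s.Nonempty → ∃ v ∈ s, G.square.degIn s v ≤ k := by
  classical
  induction hn : Fintype.card V using Nat.strong_induction_on generalizing V with
  | _ n ih =>
  rintro s ⟨u, hu⟩
  obtain ⟨v, hv₂, hvk⟩ := hyp V G ⟨u⟩ hout hΔ
  by_cases hvs : v ∈ s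
  · exact ⟨v, hvs, (degIn_le_deg _ s v).trans hvk⟩
  have hsv : ↑s ⊆ ({v}ᶜ : Set V) := fun w hw (hwv : w = v) => hvs (hwv ▸ hw)
  have hcard : Fintype.card ({v}ᶜ : Set V) < n :=
    hn ▸ Fintype.card_subtype_lt (p := (· ∈ ({v}ᶜ : Set V))) (x := v) (by simp)
  obtain ⟨w, hws, hwk⟩ := ih _ hcard (G.suppressVertex v) (hout.suppressVertex hv₂)
    (maxDeg_suppressVertex_le hv₂ hΔ) rfl (s.subtype (· ∈ ({v}ᶜ : Set V)))
    ⟨⟨u, hsv hu⟩, Finset.mem_subtype.mpr hu⟩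
  exact ⟨w, Finset.mem_subtype.mp hws,
    (degIn_le_degIn_subtype (square_induce_le_square_suppressVertex G v) hsv w).trans hwk⟩
end

section
/- Let G be a finite connected outerplanar simple graph with maximum degree Δ. If G is not isomorphic to the 5-cycle C₅, then ω(G²) ≤ Δ + 2; moreover, for G = C₅ one has ω(G²) = 5 = Δ + 3. -/
open SimpleGraph

/-!
Draw `G` with its vertices on a line and its edges as pairwise non-crossing arcs above it. The
basic geometric fact is that a path of length at most two from a vertex strictly inside an arc
to a vertex outside it passes through an endpoint of the arc. Let `a` and `b` be the leftmost and
rightmost vertices of a clique `S` of `G²`. In every configuration this fact produces a vertex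
adjacent to all of `S` except at most two vertices, which gives `|S| ≤ Δ + 2`:
* if `a` and `b` have a common neighbour between them, it is such a vertex;
* if their common neighbours all lie outside, one of them, `m`, or the last neighbour of `a`
  before `b` is such a vertex;
* if `ab` is an edge, the candidates are `a`, `b` and the last neighbour `x` of `a` before `b` or
  the first neighbour `y` of `b` after `a`, unless `S` consists of `a`, `x`, `y`, `b` and one
  common neighbour of `x` and `y`. Then `S` spans a `5`-cycle, and if `Δ = 2` this cycle is all of
  the connected graph `G`.
-/

namespace SimpleGraph

open Finset
open Set (Icc Ioo)

variable {V W : Type*} {G : SimpleGraph V} {H : SimpleGraph W}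

theorem Iso.deg_eq (f : G ≃g H) (v : V) : H.deg (f v) = G.deg v := by
  have : H.neighborSet (f v) = f '' G.neighborSet v := by
    ext w
    obtain ⟨u, rfl⟩ := f.surjective w
    simp [f.injective.mem_set_image, f.map_adj_iff]
  rw [deg, deg, this, Set.ncard_image_of_injective _ f.injective]

theorem cycleGraph_deg (n : ℕ) (i : Fin (n + 3)) : (cycleGraph (n + 3)).deg i = 2 := by
  rw [deg, ← Nat.card_coe_set_eq, Nat.card_eq_fintype_card, card_neighborSet_eq_degree,
    cycleGraph_degree_three_le]

theorem isContained_cycleGraph {n : ℕ} (v : Fin (n + 2) → V) (hv : Function.Injective v)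
    (hadj : ∀ i, G.Adj (v i) (v (i + 1))) : cycleGraph (n + 2) ⊑ G := by
  refine ⟨⟨⟨v, fun {i j} h => ?_⟩, hv⟩⟩
  rcases h with h | h <;> rw [sub_eq_iff_eq_add'] at h
  · exact h ▸ (hadj j).symm
  · exact h ▸ hadj i

section Fintype

variable [Fintype V]

theorem deg_le_maxDeg (v : V) : G.deg v ≤ G.maxDeg :=
  le_sup (f := G.deg) (mem_univ v)

theorem maxDeg_eq_of_forall_deg_eq [Nonempty V] {d : ℕ} (h : ∀ v, G.deg v = d) :
    G.maxDeg = d :=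
  le_antisymm (Finset.sup_le fun v _ => (h v).le) (h (Classical.arbitrary V) ▸ deg_le_maxDeg _)

theorem card_le_maxDeg_add_two {S : Finset V} {g u v : V}
    (h : ∀ s ∈ S, s = u ∨ s = v ∨ G.Adj g s) : #S ≤ G.maxDeg + 2 := by
  have hsub : (S : Set V) ⊆ insert u (insert v (G.neighborSet g)) := h
  calc #S = (S : Set V).ncard := (Set.ncard_coe_finset S).symm
    _ ≤ (insert u (insert v (G.neighborSet g))).ncard := Set.ncard_le_ncard hsub
    _ ≤ G.deg g + 2 := by grw [Set.ncard_insert_le, Set.ncard_insert_le]; rfl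
    _ ≤ G.maxDeg + 2 := by grw [deg_le_maxDeg g]

theorem Connected.nonempty_iso_cycleGraph (hconn : G.Connected) (hΔ : G.maxDeg ≤ 2) {n : ℕ}
    (hC : cycleGraph (n + 3) ⊑ G) : Nonempty (G ≃g cycleGraph (n + 3)) := by
  obtain ⟨c⟩ := hC
  have hc : Function.Injective c := c.injective
  have hN : ∀ i, G.neighborSet (c i) = c '' (cycleGraph (n + 3)).neighborSet i := by
    refine fun i => (Set.eq_of_subset_of_ncard_le ?_ ?_ (Set.toFinite _)).symm
    · exact c.toHom.image_neighborSet_subset i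
    · rw [Set.ncard_image_of_injective _ hc]
      exact (deg_le_maxDeg (c i)).trans (hΔ.trans (cycleGraph_deg n i).ge)
  have hwalk : ∀ {u w} (_ : G.Walk u w), u ∈ Set.range c → w ∈ Set.range c := by
    intro u w q
    induction q with
    | nil => exact id
    | cons huv _ ih =>
      rintro ⟨i, rfl⟩
      obtain ⟨j, -, rfl⟩ := (hN i).subset huv
      exact ih ⟨j, rfl⟩
  have hsurj : ∀ w, w ∈ Set.range c := fun w =>
    hwalk (hconn.preconnected (c 0) w).some ⟨0, rfl⟩
  refine ⟨(⟨Equiv.ofBijective c ⟨hc, hsurj⟩, fun {i j} => ?_⟩ : cycleGraph (n + 3) ≃g G).symm⟩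
  change c j ∈ G.neighborSet (c i) ↔ j ∈ (cycleGraph (n + 3)).neighborSet i
  rw [hN, hc.mem_set_image]

theorem cliqueNum_square_of_iso_cycleGraph_five (φ : G ≃g cycleGraph 5) :
    G.square.cliqueNum = 5 := by
  have hcard : Fintype.card V = 5 := by simpa using Fintype.card_congr φ.toEquiv
  have hC : ∀ i j : Fin 5, i ≠ j →
      (cycleGraph 5).Adj i j ∨ ∃ k, (cycleGraph 5).Adj i k ∧ (cycleGraph 5).Adj k j := by
    decide
  have hclique : G.square.IsClique (univ : Finset V) := by
    intro u _ v _ huv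
    refine ⟨huv, ?_⟩
    rcases hC (φ u) (φ v) (φ.injective.ne huv) with h | ⟨k, h₁, h₂⟩
    · exact .inl (φ.map_adj_iff.1 h)
    · exact .inr ⟨φ.symm k, φ.map_adj_iff.1 (by simpa using h₁),
        φ.map_adj_iff.1 (by simpa using h₂)⟩
  obtain ⟨S, hS⟩ := G.square.exists_isNClique_cliqueNum
  refine le_antisymm ?_ ?_
  · rw [← hS.card_eq, ← hcard]
    exact card_le_univ S
  · simpa [hcard] using IsClique.card_le_cliqueNum (tc := hclique)

end Fintype

/-- The codomain is an arbitrary linear order, rather than `ℕ`, so that `BookEmbedding.reverse`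
(into the order dual) turns every statement into its mirror image. -/
structure BookEmbedding (G : SimpleGraph V) (α : Type*) [LinearOrder α] where
  toFun : V → α
  injective : Function.Injective toFun
  not_crossing : ∀ ⦃a b c d : V⦄, G.Adj a b → G.Adj c d →
    toFun a < toFun c → toFun c < toFun b → toFun b < toFun d → False

theorem IsOuterplanar.nonempty_bookEmbedding (h : G.IsOuterplanar) :
    Nonempty (G.BookEmbedding ℕ) :=
  let ⟨f, hf, hcross⟩ := h
  ⟨⟨f, hf, fun a b c d hab hcd h₁ h₂ h₃ => hcross a b c d hab hcd ⟨h₁, h₂, h₃⟩⟩⟩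

namespace BookEmbedding

variable {α : Type*} [LinearOrder α]

instance : CoeFun (G.BookEmbedding α) fun _ => V → α := ⟨toFun⟩

variable (e : G.BookEmbedding α) {S : Finset V} {a b k₁ k₂ l l₁ l₂ m p q r s t w x x' y z z' : V}

def reverse : G.BookEmbedding αᵒᵈ where
  toFun v := OrderDual.toDual (e v)
  injective := OrderDual.toDual.injective.comp e.injective
  not_crossing _ _ _ _ hab hcd h₁ h₂ h₃ := e.not_crossing hcd.symm hab.symm h₃ h₂ h₁

theorem lt_or_eq_or_lt (s x : V) : e s < e x ∨ s = x ∨ e x < e s :=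
  (lt_trichotomy (e s) (e x)).imp_right (Or.imp_left fun h => e.injective h)

theorem ne_of_lt (h : e x < e y) : x ≠ y := fun hxy => h.ne (congrArg e hxy)

theorem mem_Icc_of_adj (hpq : G.Adj p q) (hr : e r ∈ Ioo (e p) (e q)) (hrs : G.Adj r s) :
    e s ∈ Icc (e p) (e q) := by
  refine ⟨le_of_not_gt fun h => ?_, le_of_not_gt fun h => ?_⟩
  · exact e.not_crossing hrs.symm hpq h hr.1 hr.2
  · exact e.not_crossing hpq hrs hr.1 hr.2 h

theorem adj_endpoint_of_square_adj (hpq : G.Adj p q) (hr : e r ∈ Ioo (e p) (e q))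
    (hs : e s < e p ∨ e q < e s) (hrs : G.square.Adj r s) :
    (G.Adj r p ∧ G.Adj p s) ∨ (G.Adj r q ∧ G.Adj q s) := by
  have hout : e s ∉ Icc (e p) (e q) := fun h => hs.elim h.1.not_gt h.2.not_gt
  obtain ⟨-, hrs | ⟨w, hrw, hws⟩⟩ := hrs
  · exact absurd (e.mem_Icc_of_adj hpq hr hrs) hout
  obtain ⟨hpw, hwq⟩ := e.mem_Icc_of_adj hpq hr hrw
  rcases hpw.eq_or_lt with hpw | hpw
  · obtain rfl := e.injective hpw
    exact .inl ⟨hrw, hws⟩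
  rcases hwq.lt_or_eq with hwq | hwq
  · exact absurd (e.mem_Icc_of_adj hpq ⟨hpw, hwq⟩ hws) hout
  · obtain rfl := e.injective hwq
    exact .inr ⟨hrw, hws⟩

theorem eq_of_adj_of_adj (hxz : G.Adj x z) (hzy : G.Adj z y) (hxz' : G.Adj x z')
    (hz'y : G.Adj z' y) (hz : e z ∈ Ioo (e x) (e y)) (hz' : e z' ∈ Ioo (e x) (e y)) :
    z = z' := by
  rcases e.lt_or_eq_or_lt z z' with h | h | h
  · exact (e.not_crossing hxz' hzy hz.1 h hz'.2).elim
  · exact h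
  · exact (e.not_crossing hxz hz'y hz'.1 h hz.2).elim

theorem isContained_cycleGraph_five (hax : G.Adj a x) (hxt : G.Adj x t) (hty : G.Adj t y)
    (hyb : G.Adj y b) (hba : G.Adj b a) (h₁ : e a < e x) (h₂ : e x < e t) (h₃ : e t < e y)
    (h₄ : e y < e b) : cycleGraph 5 ⊑ G := by
  refine isContained_cycleGraph ![a, x, t, y, b] ?_ fun i => ?_
  · refine (StrictMono.injective (f := e ∘ ![a, x, t, y, b]) ?_).of_comp
    refine Fin.strictMono_iff_lt_succ.2 fun i => ?_
    fin_cases i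
    exacts [h₁, h₂, h₃, h₄]
  · fin_cases i
    exacts [hax, hxt, hty, hyb, hba]

theorem not_square_adj_of_lt (hpl₂ : G.Adj p l₂) (hqk₁ : G.Adj q k₁) (hpk₂ : ¬G.Adj p k₂)
    (h₁ : e p < e l₁) (h₂ : e l₁ < e l₂) (h₃ : e l₂ < e k₁) (h₄ : e k₁ < e k₂)
    (h₅ : e k₂ < e q) : ¬G.square.Adj l₁ k₂ := fun h => by
  rcases e.adj_endpoint_of_square_adj hpl₂ ⟨h₁, h₂⟩ (.inr (h₃.trans h₄)) h with ⟨-, h⟩ | ⟨-, h⟩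
  · exact hpk₂ h
  · exact e.not_crossing h hqk₁.symm h₃ h₄ h₅

theorem exists_forall_eq_or_adj_of_fan (hS : G.square.IsClique (S : Set V))
    (hK : ∀ k ∈ S, e k ∈ Ioo (e p) (e q) → G.Adj p k ∨ G.Adj q k) :
    ∃ w ∈ ({p, q} : Set V), ∃ u, ∀ k ∈ S, e k ∈ Ioo (e p) (e q) → k = u ∨ G.Adj w k := by
  by_contra! h
  have hpair : ∀ w ∈ ({p, q} : Set V), ∃ k₁ k₂, k₁ ∈ S ∧ k₂ ∈ S ∧ e k₁ ∈ Ioo (e p) (e q) ∧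
      e k₂ ∈ Ioo (e p) (e q) ∧ ¬G.Adj w k₁ ∧ ¬G.Adj w k₂ ∧ e k₁ < e k₂ := by
    intro w hw
    obtain ⟨k, hkS, hk, -, hwk⟩ := h w hw w
    obtain ⟨k', hk'S, hk', hkk', hwk'⟩ := h w hw k
    rcases (e.injective.ne hkk').lt_or_gt with hlt | hlt
    · exact ⟨k', k, hk'S, hkS, hk', hk, hwk', hwk, hlt⟩
    · exact ⟨k, k', hkS, hk'S, hk, hk', hwk, hwk', hlt⟩
  obtain ⟨k₁, k₂, hk₁S, hk₂S, hk₁, hk₂, hpk₁, hpk₂, hk⟩ := hpair p (by simp)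
  obtain ⟨l₁, l₂, hl₁S, hl₂S, hl₁, hl₂, -, hql₂, hl⟩ := hpair q (by simp)
  have hqk₁ : G.Adj q k₁ := (hK k₁ hk₁S hk₁).resolve_left hpk₁
  have hpl₂ : G.Adj p l₂ := (hK l₂ hl₂S hl₂).resolve_right hql₂
  have hlk : e l₂ < e k₁ := by
    rcases e.lt_or_eq_or_lt l₂ k₁ with h | rfl | h
    · exact h
    · exact absurd hpl₂ hpk₁
    · exact (e.not_crossing hpl₂ hqk₁.symm hk₁.1 h hl₂.2).elim
  exact e.not_square_adj_of_lt hpl₂ hqk₁ hpk₂ hl₁.1 hl hlk hk hk₂.2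
    (hS hl₁S hk₂S (e.ne_of_lt (hl.trans (hlk.trans hk))))

theorem exists_forall_eq_of_adj_of_adj
    (h : ∀ t ∈ S, e t ∈ Ioo (e x) (e y) → G.Adj x t ∧ G.Adj t y) :
    ∃ t₀, ∀ t ∈ S, e t ∈ Ioo (e x) (e y) → t = t₀ := by
  by_cases hM : ∃ t ∈ S, e t ∈ Ioo (e x) (e y)
  · obtain ⟨t₀, ht₀, hxty₀⟩ := hM
    exact ⟨t₀, fun t ht hxty => e.eq_of_adj_of_adj (h t ht hxty).1 (h t ht hxty).2
      (h t₀ ht₀ hxty₀).1 (h t₀ ht₀ hxty₀).2 hxty hxty₀⟩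
  · exact ⟨x, fun t ht hxty => (hM ⟨t, ht, hxty⟩).elim⟩

structure Spans (S : Finset V) (a b : V) : Prop where
  left_mem : a ∈ S
  right_mem : b ∈ S
  mem_Icc : ∀ s ∈ S, e s ∈ Icc (e a) (e b)

structure IsLastNeighbor (a b x : V) : Prop where
  adj : G.Adj a x
  mem_Ioo : e x ∈ Ioo (e a) (e b)
  le : ∀ ⦃x'⦄, G.Adj a x' → e x' ∈ Ioo (e a) (e b) → e x' ≤ e x

theorem exists_isLastNeighbor [Finite V] (h : ∃ x, G.Adj a x ∧ e x ∈ Ioo (e a) (e b)) :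
    ∃ x, e.IsLastNeighbor a b x := by
  obtain ⟨x, hx, hmax⟩ := Set.exists_max_image {x | G.Adj a x ∧ e x ∈ Ioo (e a) (e b)} e
    (Set.toFinite _) h
  exact ⟨x, hx.1, hx.2, fun x' hax' hx' => hmax x' ⟨hax', hx'⟩⟩

variable {e}

theorem Spans.reverse (h : e.Spans S a b) : e.reverse.Spans S b a :=
  ⟨h.right_mem, h.left_mem, fun s hs => (h.mem_Icc s hs).symm⟩

theorem Spans.mem_Ioo (h : e.Spans S a b) (hs : s ∈ S) (hsa : s ≠ a) (hsb : s ≠ b) :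
    e s ∈ Ioo (e a) (e b) :=
  ⟨(h.mem_Icc s hs).1.lt_of_ne fun h => hsa (e.injective h).symm,
    (h.mem_Icc s hs).2.lt_of_ne fun h => hsb (e.injective h)⟩

theorem Spans.eq_or_eq_or_eq_or_eq_or_mem_Ioo (h : e.Spans S a b)
    (hx : ∀ s ∈ S, e a < e s → e x ≤ e s) (hy : ∀ s ∈ S, e s < e b → e s ≤ e y) (hs : s ∈ S) :
    s = a ∨ s = b ∨ s = x ∨ s = y ∨ e s ∈ Ioo (e x) (e y) := by
  rcases eq_or_ne s a with hsa | hsa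
  · exact .inl hsa
  rcases eq_or_ne s b with hsb | hsb
  · exact .inr (.inl hsb)
  have hsin := h.mem_Ioo hs hsa hsb
  rcases (hx s hs hsin.1).lt_or_eq with hxs | hxs
  · rcases (hy s hs hsin.2).lt_or_eq with hsy | hsy
    · exact .inr (.inr (.inr (.inr ⟨hxs, hsy⟩)))
    · exact .inr (.inr (.inr (.inl (e.injective hsy))))
  · exact .inr (.inr (.inl (e.injective hxs).symm))

theorem IsLastNeighbor.not_adj (hx : e.IsLastNeighbor a b x) (ht : e x < e t) (htb : e t < e b) :
    ¬G.Adj a t :=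
  fun hat => (hx.le hat ⟨hx.mem_Ioo.1.trans ht, htb⟩).not_gt ht

theorem IsLastNeighbor.eq_of_adj (hx : e.IsLastNeighbor a b x) (hax' : G.Adj a x')
    (hx' : e x' ∈ Ioo (e a) (e b)) (hx't : G.Adj x' t) (ht : e x < e t) : x' = x := by
  rcases (hx.le hax' hx').lt_or_eq with h | h
  · exact (e.not_crossing hx.adj hx't hx'.1 h ht).elim
  · exact e.injective h

theorem IsLastNeighbor.adj_adj_of_square_adj (hx : e.IsLastNeighbor a b x)
    (hl : e l ∈ Ioo (e a) (e x)) (hs : e s ∈ Ioo (e x) (e b)) (hls : G.square.Adj l s) :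
    G.Adj l x ∧ G.Adj x s :=
  (e.adj_endpoint_of_square_adj hx.adj hl (.inr hs.1) hls).resolve_left fun h =>
    hx.not_adj hs.1 hs.2 h.2

theorem adj_or_adj_or_exists_of_square_adj_of_adj (hab : G.Adj a b)
    (ht : e t ∈ Ioo (e a) (e b)) (hta : G.square.Adj t a) :
    G.Adj a t ∨ G.Adj b t ∨ ∃ x, G.Adj a x ∧ e x ∈ Ioo (e a) (e b) ∧ G.Adj x t := by
  obtain ⟨-, hta | ⟨w, htw, hwa⟩⟩ := hta
  · exact .inl hta.symm
  obtain ⟨haw, hwb⟩ := e.mem_Icc_of_adj hab ht htw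
  rcases haw.eq_or_lt with h | haw
  · obtain rfl := e.injective h
    exact (G.irrefl hwa).elim
  rcases hwb.lt_or_eq with hwb | h
  · exact .inr (.inr ⟨w, hwa.symm, ⟨haw, hwb⟩, htw.symm⟩)
  · obtain rfl := e.injective h
    exact .inr (.inl htw.symm)

theorem IsLastNeighbor.adj_of_square_adj (hab : G.Adj a b) (hx : e.IsLastNeighbor a b x)
    (hxt : e x < e t) (htb : e t < e b) (hbt : ¬G.Adj b t) (hta : G.square.Adj t a) :
    G.Adj x t := by
  rcases e.adj_or_adj_or_exists_of_square_adj_of_adj hab ⟨hx.mem_Ioo.1.trans hxt, htb⟩ hta with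
    h | h | ⟨x', hax', hx', hx't⟩
  · exact (hx.not_adj hxt htb h).elim
  · exact (hbt h).elim
  · exact hx.eq_of_adj hax' hx' hx't hxt ▸ hx't

theorem Spans.forall_eq_or_adj_of_adj (hsp : e.Spans S a b) (hS : G.square.IsClique (S : Set V))
    (hab : G.Adj a b) (hX : ∀ x, G.Adj a x → e x ∉ Ioo (e a) (e b)) :
    ∀ s ∈ S, s = b ∨ G.Adj b s := by
  intro s hs
  rcases eq_or_ne s b with h | hsb
  · exact .inl h
  rcases eq_or_ne s a with rfl | hsa
  · exact .inr hab.symm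
  have hsin := hsp.mem_Ioo hs hsa hsb
  rcases e.adj_or_adj_or_exists_of_square_adj_of_adj hab hsin (hS hs hsp.left_mem hsa) with
    h | h | ⟨x, hax, hx, -⟩
  · exact (hX s h hsin).elim
  · exact .inr h
  · exact (hX x hax hx).elim

theorem Spans.adj_of_lt_of_mem_Ioo (hsp : e.Spans S a b) (hS : G.square.IsClique (S : Set V))
    (hab : ¬G.Adj a b) (ham : G.Adj a m) (hm : e m ∈ Ioo (e a) (e b)) (hs : s ∈ S)
    (hsm : e s < e m) : G.Adj m s := by
  rcases eq_or_ne s a with rfl | hsa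
  · exact ham.symm
  have hsb := e.ne_of_lt (hsm.trans hm.2)
  rcases e.adj_endpoint_of_square_adj ham ⟨(hsp.mem_Ioo hs hsa hsb).1, hsm⟩ (.inr hm.2)
      (hS hs hsp.right_mem hsb) with ⟨-, h⟩ | ⟨h, -⟩
  · exact (hab h).elim
  · exact h.symm

theorem mem_Icc_of_adj_of_lt (hma : G.Adj m a) (hmb : G.Adj m b) (hm : e m < e a)
    (ht : e t ∈ Ioo (e a) (e b)) (htw : G.Adj t w) (hwm : w ≠ m) : e w ∈ Icc (e a) (e b) := by
  obtain ⟨hmw, hwb⟩ := e.mem_Icc_of_adj hmb ⟨hm.trans ht.1, ht.2⟩ htw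
  refine ⟨le_of_not_gt fun hwa => ?_, hwb⟩
  have hmw : e m < e w := hmw.lt_of_ne fun h => hwm (e.injective h).symm
  exact (e.mem_Icc_of_adj hma ⟨hmw, hwa⟩ htw.symm).2.not_gt ht.1

theorem mem_Icc_of_adj_of_lt_or_lt (hma : G.Adj m a) (hmb : G.Adj m b)
    (hm : e m < e a ∨ e b < e m) (ht : e t ∈ Ioo (e a) (e b)) (htw : G.Adj t w) (hwm : w ≠ m) :
    e w ∈ Icc (e a) (e b) := by
  rcases hm with hm | hm
  · exact e.mem_Icc_of_adj_of_lt hma hmb hm ht htw hwm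
  · exact (e.reverse.mem_Icc_of_adj_of_lt hmb hma hm ht.symm htw hwm).symm

theorem adj_or_adj_or_exists_of_square_adj_of_not_adj (hma : G.Adj m a) (hmb : G.Adj m b)
    (hm : e m < e a ∨ e b < e m) (hab : ¬G.Adj a b) (ht : e t ∈ Ioo (e a) (e b))
    (hta : G.square.Adj t a) :
    G.Adj a t ∨ G.Adj m t ∨ ∃ x, G.Adj a x ∧ e x ∈ Ioo (e a) (e b) ∧ G.Adj x t := by
  obtain ⟨-, hta | ⟨w, htw, hwa⟩⟩ := hta
  · exact .inl hta.symm
  rcases eq_or_ne w m with rfl | hwm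
  · exact .inr (.inl htw.symm)
  obtain ⟨haw, hwb⟩ := e.mem_Icc_of_adj_of_lt_or_lt hma hmb hm ht htw hwm
  rcases haw.eq_or_lt with h | haw
  · obtain rfl := e.injective h
    exact (G.irrefl hwa).elim
  rcases hwb.lt_or_eq with hwb | h
  · exact .inr (.inr ⟨w, hwa.symm, ⟨haw, hwb⟩, htw.symm⟩)
  · obtain rfl := e.injective h
    exact (hab hwa.symm).elim

theorem IsLastNeighbor.adj_or_adj_or_adj (hma : G.Adj m a) (hmb : G.Adj m b)
    (hm : e m < e a ∨ e b < e m) (hab : ¬G.Adj a b) (hx : e.IsLastNeighbor a b x)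
    (hxt : e x < e t) (htb : e t < e b) (hta : G.square.Adj t a) :
    G.Adj a t ∨ G.Adj m t ∨ G.Adj x t := by
  rcases e.adj_or_adj_or_exists_of_square_adj_of_not_adj hma hmb hm hab
      ⟨hx.mem_Ioo.1.trans hxt, htb⟩ hta with h | h | ⟨x', hax', hx', hx't⟩
  · exact .inl h
  · exact .inr (.inl h)
  · exact .inr (.inr (hx.eq_of_adj hax' hx' hx't hxt ▸ hx't))

theorem IsLastNeighbor.adj_of_not_adj (hma : G.Adj m a) (hmb : G.Adj m b)
    (hm : e m < e a ∨ e b < e m) (hab : ¬G.Adj a b) (hx : e.IsLastNeighbor a b x)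
    (hxt : e x < e t) (htb : e t < e b) (hmt : ¬G.Adj m t) (hta : G.square.Adj t a) :
    G.Adj x t := by
  rcases hx.adj_or_adj_or_adj hma hmb hm hab hxt htb hta with h | h | h
  exacts [(hx.not_adj hxt htb h).elim, (hmt h).elim, h]

theorem Spans.forall_adj_of_not_adj (hsp : e.Spans S a b) (hS : G.square.IsClique (S : Set V))
    (hma : G.Adj m a) (hmb : G.Adj m b) (hm : e m < e a ∨ e b < e m) (hab : ¬G.Adj a b)
    (hX : ∀ x, G.Adj a x → e x ∉ Ioo (e a) (e b)) : ∀ s ∈ S, G.Adj m s := by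
  intro s hs
  rcases eq_or_ne s a with rfl | hsa
  · exact hma
  rcases eq_or_ne s b with rfl | hsb
  · exact hmb
  have hsin := hsp.mem_Ioo hs hsa hsb
  rcases e.adj_or_adj_or_exists_of_square_adj_of_not_adj hma hmb hm hab hsin
      (hS hs hsp.left_mem hsa) with h | h | ⟨x, hax, hx, -⟩
  · exact (hX s h hsin).elim
  · exact h
  · exact (hX x hax hx).elim

theorem Spans.le_of_isLastNeighbor (hsp : e.Spans S a b) (hS : G.square.IsClique (S : Set V))
    (hab : ¬G.Adj a b) (hno : ∀ w, G.Adj a w → G.Adj w b → e w ∉ Ioo (e a) (e b))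
    (hx : e.IsLastNeighbor a b x) (ht : t ∈ S) (hat : e a < e t) : e x ≤ e t := by
  refine le_of_not_gt fun htx => ?_
  rcases e.adj_endpoint_of_square_adj hx.adj ⟨hat, htx⟩ (.inr hx.mem_Ioo.2)
      (hS ht hsp.right_mem (e.ne_of_lt (htx.trans hx.mem_Ioo.2))) with ⟨-, h⟩ | ⟨-, h⟩
  · exact hab h
  · exact hno x hx.adj h hx.mem_Ioo

theorem Spans.forall_adj_of_adj_of_lt (hsp : e.Spans S a b) (hS : G.square.IsClique (S : Set V))
    (hma : G.Adj m a) (hmb : G.Adj m b) (hm : e m < e a) (ht : t ∈ S)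
    (htin : e t ∈ Ioo (e a) (e b)) (hmt : G.Adj m t) (hat : ¬G.Adj a t) (hbt : ¬G.Adj b t) :
    ∀ s ∈ S, G.Adj m s := by
  intro s hs
  rcases e.lt_or_eq_or_lt s t with hst | rfl | hts
  · rcases eq_or_ne s a with rfl | hsa
    · exact hma
    have hsb := e.ne_of_lt (hst.trans htin.2)
    rcases e.adj_endpoint_of_square_adj hmt ⟨hm.trans (hsp.mem_Ioo hs hsa hsb).1, hst⟩
        (.inr htin.2) (hS hs hsp.right_mem hsb) with ⟨h, -⟩ | ⟨-, h⟩
    · exact h.symm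
    · exact (hbt h.symm).elim
  · exact hmt
  · rcases eq_or_ne s b with rfl | hsb
    · exact hmb
    rcases e.adj_endpoint_of_square_adj hmt ⟨hm, htin.1⟩ (.inr hts)
        (hS hsp.left_mem hs (e.ne_of_lt (htin.1.trans hts))) with ⟨-, h⟩ | ⟨h, -⟩
    · exact h
    · exact (hat h).elim

theorem Spans.forall_adj_of_adj (hsp : e.Spans S a b) (hS : G.square.IsClique (S : Set V))
    (hma : G.Adj m a) (hmb : G.Adj m b) (hm : e m < e a ∨ e b < e m) (ht : t ∈ S)
    (htin : e t ∈ Ioo (e a) (e b)) (hmt : G.Adj m t) (hat : ¬G.Adj a t) (hbt : ¬G.Adj b t) :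
    ∀ s ∈ S, G.Adj m s := by
  rcases hm with hm | hm
  · exact hsp.forall_adj_of_adj_of_lt hS hma hmb hm ht htin hmt hat hbt
  · exact hsp.reverse.forall_adj_of_adj_of_lt hS hmb hma hm ht htin.symm hmt hbt hat

section Fintype

variable [Fintype V]

theorem Spans.card_le_of_not_adj_of_mem_Ioo (hsp : e.Spans S a b)
    (hS : G.square.IsClique (S : Set V)) (hab : ¬G.Adj a b) (ham : G.Adj a m) (hmb : G.Adj m b)
    (hm : e m ∈ Ioo (e a) (e b)) : #S ≤ G.maxDeg + 2 := by
  refine card_le_maxDeg_add_two (g := m) (u := m) (v := m) fun s hs => ?_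
  rcases e.lt_or_eq_or_lt s m with h | h | h
  · exact .inr (.inr (hsp.adj_of_lt_of_mem_Ioo hS hab ham hm hs h))
  · exact .inl h
  · exact .inr (.inr (hsp.reverse.adj_of_lt_of_mem_Ioo hS (fun h => hab h.symm) hmb.symm
      hm.symm hs h))

theorem Spans.card_le_of_mem_Ioo_of_mem_Ioo (hsp : e.Spans S a b)
    (hS : G.square.IsClique (S : Set V)) (hx : e.IsLastNeighbor a b x) (hl : l ∈ S)
    (hlx : e l ∈ Ioo (e a) (e x)) (hs : s ∈ S) (hxs : e s ∈ Ioo (e x) (e b)) :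
    #S ≤ G.maxDeg + 2 := by
  refine card_le_maxDeg_add_two (g := x) (u := x) (v := b) fun t ht => ?_
  rcases eq_or_ne t b with htb | htb
  · exact .inr (.inl htb)
  rcases eq_or_ne t a with rfl | hta
  · exact .inr (.inr hx.adj.symm)
  have htin := hsp.mem_Ioo ht hta htb
  rcases e.lt_or_eq_or_lt t x with h | h | h
  · exact .inr (.inr (hx.adj_adj_of_square_adj ⟨htin.1, h⟩ hxs
      (hS ht hs (e.ne_of_lt (h.trans hxs.1)))).1.symm)
  · exact .inl h
  · exact .inr (.inr (hx.adj_adj_of_square_adj hlx ⟨h, htin.2⟩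
      (hS hl ht (e.ne_of_lt (hlx.2.trans h)))).2)

theorem Spans.card_le_of_forall_not_mem_Ioo (hsp : e.Spans S a b)
    (hS : G.square.IsClique (S : Set V)) (hab : G.Adj a b) (hx : e.IsLastNeighbor a b x)
    (hU : ∀ s ∈ S, e s ∉ Ioo (e x) (e b)) : #S ≤ G.maxDeg + 2 := by
  have hK : ∀ k ∈ S, e k ∈ Ioo (e a) (e x) → G.Adj a k ∨ (G.Adj x k ∧ G.Adj x b) := by
    intro k hk hkx
    rcases e.adj_endpoint_of_square_adj hx.adj hkx (.inr hx.mem_Ioo.2)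
        (hS hk hsp.right_mem (e.ne_of_lt (hkx.2.trans hx.mem_Ioo.2))) with ⟨h, -⟩ | ⟨h, h'⟩
    · exact .inl h.symm
    · exact .inr ⟨h.symm, h'⟩
  obtain ⟨w, hwa, hwx, hwb, u, hu⟩ : ∃ w, (w = a ∨ G.Adj w a) ∧ (w = x ∨ G.Adj w x) ∧
      G.Adj w b ∧ ∃ u, ∀ k ∈ S, e k ∈ Ioo (e a) (e x) → k = u ∨ G.Adj w k := by
    by_cases hxb : G.Adj x b
    · obtain ⟨w, hw, hu⟩ := e.exists_forall_eq_or_adj_of_fan hS fun k hk hkx =>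
        (hK k hk hkx).imp_right And.left
      rcases hw with rfl | rfl
      · exact ⟨w, .inl rfl, .inr hx.adj, hab, hu⟩
      · exact ⟨w, .inr hx.adj.symm, .inl rfl, hxb, hu⟩
    · exact ⟨a, .inl rfl, .inr hx.adj, hab, a, fun k hk hkx =>
        .inr ((hK k hk hkx).resolve_right fun h => hxb h.2)⟩
  refine card_le_maxDeg_add_two (g := w) (u := u) (v := w) fun t ht => ?_
  rcases eq_or_ne t b with rfl | htb
  · exact .inr (.inr hwb)
  rcases eq_or_ne t a with rfl | hta
  · exact .inr (hwa.imp_left Eq.symm)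
  have htin := hsp.mem_Ioo ht hta htb
  rcases e.lt_or_eq_or_lt t x with h | rfl | h
  · exact (hu t ht ⟨htin.1, h⟩).imp_right .inr
  · exact .inr (hwx.imp_left Eq.symm)
  · exact (hU t ht ⟨h, htin.2⟩).elim

theorem Spans.card_le_or_isContained_of_isLastNeighbor (hsp : e.Spans S a b)
    (hS : G.square.IsClique (S : Set V)) (hab : G.Adj a b) (hx : e.IsLastNeighbor a b x)
    (hy : e.reverse.IsLastNeighbor b a y) (hxS : ∀ s ∈ S, e a < e s → e x ≤ e s)
    (hyS : ∀ s ∈ S, e s < e b → e s ≤ e y) :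
    #S ≤ G.maxDeg + 2 ∨ (#S ≤ 5 ∧ cycleGraph 5 ⊑ G) := by
  classical
  have hmid : ∀ t ∈ S, e t ∈ Ioo (e x) (e y) → G.Adj x t ∧ G.Adj t y := by
    intro t ht hxty
    have hat : e a < e t := hx.mem_Ioo.1.trans hxty.1
    have htb : e t < e b := hxty.2.trans hy.mem_Ioo.1
    refine ⟨hx.adj_of_square_adj hab hxty.1 htb (hy.not_adj hxty.2 hat) ?_,
      (hy.adj_of_square_adj hab.symm hxty.2 hat (hx.not_adj hxty.1 htb) ?_).symm⟩
    · exact hS ht hsp.left_mem (e.ne_of_lt hat).symm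
    · exact hS ht hsp.right_mem (e.ne_of_lt htb)
  have hclass := fun s (hs : s ∈ S) => hsp.eq_or_eq_or_eq_or_eq_or_mem_Ioo hxS hyS hs
  obtain ⟨t₀, ht₀⟩ := e.exists_forall_eq_of_adj_of_adj hmid
  by_cases hM : ∃ t ∈ S, e t ∈ Ioo (e x) (e y)
  · obtain ⟨t, ht, hxty⟩ := hM
    have hsub : S ⊆ {a, x, t, y, b} := by
      intro s hs
      simp only [mem_insert, mem_singleton]
      rcases hclass s hs with h | h | h | h | hs'
      · exact .inl h
      · exact .inr (.inr (.inr (.inr h)))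
      · exact .inr (.inl h)
      · exact .inr (.inr (.inr (.inl h)))
      · exact .inr (.inr (.inl ((ht₀ s hs hs').trans (ht₀ t ht hxty).symm)))
    exact .inr ⟨(card_le_card hsub).trans card_le_five, e.isContained_cycleGraph_five hx.adj
      (hmid t ht hxty).1 (hmid t ht hxty).2 hy.adj.symm hab.symm hx.mem_Ioo.1 hxty.1 hxty.2
      hy.mem_Ioo.1⟩
  · refine .inl (card_le_maxDeg_add_two (g := a) (u := a) (v := y) fun s hs => ?_)
    rcases hclass s hs with h | rfl | rfl | h | h
    · exact .inl h
    · exact .inr (.inr hab)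
    · exact .inr (.inr hx.adj)
    · exact .inr (.inl h)
    · exact (hM ⟨s, hs, h⟩).elim

theorem Spans.card_le_or_isContained_of_adj (hsp : e.Spans S a b)
    (hS : G.square.IsClique (S : Set V)) (hab : G.Adj a b) :
    #S ≤ G.maxDeg + 2 ∨ (#S ≤ 5 ∧ cycleGraph 5 ⊑ G) := by
  by_cases hX : ∃ x, G.Adj a x ∧ e x ∈ Ioo (e a) (e b)
  swap
  · refine .inl (card_le_maxDeg_add_two (g := b) (u := b) (v := b) fun s hs => ?_)
    exact (hsp.forall_eq_or_adj_of_adj hS hab (fun x hax hx => hX ⟨x, hax, hx⟩) s hs).imp_right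
      .inr
  by_cases hY : ∃ y, G.Adj b y ∧ e y ∈ Ioo (e a) (e b)
  swap
  · refine .inl (card_le_maxDeg_add_two (g := a) (u := a) (v := a) fun s hs => ?_)
    exact (hsp.reverse.forall_eq_or_adj_of_adj hS hab.symm
      (fun y hby hy => hY ⟨y, hby, hy.symm⟩) s hs).imp_right .inr
  obtain ⟨x, hx⟩ := e.exists_isLastNeighbor hX
  obtain ⟨y, hy⟩ := e.reverse.exists_isLastNeighbor (a := b) (b := a)
    (hY.imp fun _ h => ⟨h.1, h.2.symm⟩)
  by_cases hU : ∃ s ∈ S, e s ∈ Ioo (e x) (e b)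
  swap
  · exact .inl (hsp.card_le_of_forall_not_mem_Ioo hS hab hx fun s hs h => hU ⟨s, hs, h⟩)
  by_cases hU' : ∃ s ∈ S, e s ∈ Ioo (e a) (e y)
  swap
  · exact .inl (hsp.reverse.card_le_of_forall_not_mem_Ioo hS hab.symm hy
      fun s hs h => hU' ⟨s, hs, h.symm⟩)
  obtain ⟨s, hs, hxs⟩ := hU
  obtain ⟨s', hs', hs'y⟩ := hU'
  by_cases hL : ∃ l ∈ S, e l ∈ Ioo (e a) (e x)
  · obtain ⟨l, hl, hlx⟩ := hL
    exact .inl (hsp.card_le_of_mem_Ioo_of_mem_Ioo hS hx hl hlx hs hxs)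
  by_cases hR : ∃ r ∈ S, e r ∈ Ioo (e y) (e b)
  · obtain ⟨r, hr, hry⟩ := hR
    exact .inl (hsp.reverse.card_le_of_mem_Ioo_of_mem_Ioo hS hy hr hry.symm hs' hs'y.symm)
  exact hsp.card_le_or_isContained_of_isLastNeighbor hS hab hx hy
    (fun l hl hal => le_of_not_gt fun hlx => hL ⟨l, hl, hal, hlx⟩)
    (fun r hr hrb => le_of_not_gt fun hyr => hR ⟨r, hr, hyr, hrb⟩)

theorem Spans.card_le_of_not_adj_of_isLastNeighbor (hsp : e.Spans S a b)
    (hS : G.square.IsClique (S : Set V)) (hab : ¬G.Adj a b) (hma : G.Adj m a)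
    (hmb : G.Adj m b) (hm : e m < e a ∨ e b < e m)
    (hno : ∀ w, G.Adj a w → G.Adj w b → e w ∉ Ioo (e a) (e b)) (hx : e.IsLastNeighbor a b x)
    (hy : e.reverse.IsLastNeighbor b a y) (hT : ∀ t ∈ S, e t ∈ Ioo (e x) (e y) → ¬G.Adj m t) :
    #S ≤ G.maxDeg + 2 := by
  have hba : ¬G.Adj b a := fun h => hab h.symm
  have hno' : ∀ w, G.Adj b w → G.Adj w a → e.reverse w ∉ Ioo (e.reverse b) (e.reverse a) :=
    fun w hbw hwa hw => hno w hwa.symm hbw.symm hw.symm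
  have hxS := fun s (hs : s ∈ S) => hsp.le_of_isLastNeighbor hS hab hno hx hs
  have hyS := fun s (hs : s ∈ S) => hsp.reverse.le_of_isLastNeighbor hS hba hno' hy hs
  have hmid : ∀ t ∈ S, e t ∈ Ioo (e x) (e y) → G.Adj x t ∧ G.Adj t y := by
    intro t ht hxty
    have hat : e a < e t := hx.mem_Ioo.1.trans hxty.1
    have htb : e t < e b := hxty.2.trans hy.mem_Ioo.1
    exact ⟨hx.adj_of_not_adj hma hmb hm hab hxty.1 htb (hT t ht hxty)
        (hS ht hsp.left_mem (e.ne_of_lt hat).symm),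
      (hy.adj_of_not_adj hmb hma hm.symm hba hxty.2 hat (hT t ht hxty)
        (hS ht hsp.right_mem (e.ne_of_lt htb))).symm⟩
  have hclass := fun s (hs : s ∈ S) => hsp.eq_or_eq_or_eq_or_eq_or_mem_Ioo hxS hyS hs
  obtain ⟨t₀, ht₀⟩ := e.exists_forall_eq_of_adj_of_adj hmid
  by_cases hym : y ∈ S ∧ G.Adj m y
  · refine card_le_maxDeg_add_two (g := m) (u := x) (v := t₀) fun s hs => ?_
    rcases hclass s hs with rfl | rfl | h | rfl | h
    · exact .inr (.inr hma)
    · exact .inr (.inr hmb)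
    · exact .inl h
    · exact .inr (.inr hym.2)
    · exact .inr (.inl (ht₀ s hs h))
  refine card_le_maxDeg_add_two (g := x) (u := b) (v := x) fun s hs => ?_
  rcases hclass s hs with rfl | h | h | rfl | h
  · exact .inr (.inr hx.adj.symm)
  · exact .inl h
  · exact .inr (.inl h)
  · have hxs : e x < e s := (hxS s hs hy.mem_Ioo.2).lt_of_ne fun h =>
      hno x hx.adj (e.injective h ▸ hy.adj.symm) hx.mem_Ioo
    rcases hx.adj_or_adj_or_adj hma hmb hm hab hxs hy.mem_Ioo.1
      (hS hs hsp.left_mem (e.ne_of_lt hy.mem_Ioo.2).symm) with h | h | h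
    exacts [(hno s h hy.adj.symm hy.mem_Ioo.symm).elim, (hym ⟨hs, h⟩).elim, .inr (.inr h)]
  · exact .inr (.inr (hmid s hs h).1)

theorem Spans.card_le_of_not_adj (hsp : e.Spans S a b) (hS : G.square.IsClique (S : Set V))
    (hab : ¬G.Adj a b) (hma : G.Adj m a) (hmb : G.Adj m b) (hm : e m < e a ∨ e b < e m)
    (hno : ∀ w, G.Adj a w → G.Adj w b → e w ∉ Ioo (e a) (e b)) : #S ≤ G.maxDeg + 2 := by
  have hub : (∀ s ∈ S, G.Adj m s) → #S ≤ G.maxDeg + 2 := fun h =>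
    card_le_maxDeg_add_two (g := m) (u := m) (v := m) fun s hs => .inr (.inr (h s hs))
  by_cases hX : ∃ x, G.Adj a x ∧ e x ∈ Ioo (e a) (e b)
  swap
  · exact hub (hsp.forall_adj_of_not_adj hS hma hmb hm hab fun x hax hx => hX ⟨x, hax, hx⟩)
  by_cases hY : ∃ y, G.Adj b y ∧ e y ∈ Ioo (e a) (e b)
  swap
  · exact hub (hsp.reverse.forall_adj_of_not_adj hS hmb hma hm.symm (fun h => hab h.symm)
      fun y hby hy => hY ⟨y, hby, hy.symm⟩)
  obtain ⟨x, hx⟩ := e.exists_isLastNeighbor hX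
  obtain ⟨y, hy⟩ := e.reverse.exists_isLastNeighbor (a := b) (b := a)
    (hY.imp fun _ h => ⟨h.1, h.2.symm⟩)
  by_cases hT : ∃ t ∈ S, e t ∈ Ioo (e x) (e y) ∧ G.Adj m t
  · obtain ⟨t, ht, hxty, hmt⟩ := hT
    have hat : e a < e t := hx.mem_Ioo.1.trans hxty.1
    have htb : e t < e b := hxty.2.trans hy.mem_Ioo.1
    exact hub (hsp.forall_adj_of_adj hS hma hmb hm ht ⟨hat, htb⟩ hmt (hx.not_adj hxty.1 htb)
      (hy.not_adj hxty.2 hat))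
  exact hsp.card_le_of_not_adj_of_isLastNeighbor hS hab hma hmb hm hno hx hy
    fun t ht hxty hmt => hT ⟨t, ht, hxty, hmt⟩

theorem card_le_maxDeg_add_two_or_isContained (e : G.BookEmbedding α)
    (hS : G.square.IsClique (S : Set V)) :
    #S ≤ G.maxDeg + 2 ∨ (#S ≤ 5 ∧ cycleGraph 5 ⊑ G) := by
  rcases S.eq_empty_or_nonempty with rfl | hne
  · simp
  obtain ⟨a, ha, hmin⟩ := S.exists_min_image e hne
  obtain ⟨b, hb, hmax⟩ := S.exists_max_image e hne
  have hsp : e.Spans S a b := ⟨ha, hb, fun s hs => ⟨hmin s hs, hmax s hs⟩⟩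
  rcases eq_or_ne a b with rfl | hab
  · refine .inl (card_le_maxDeg_add_two (g := a) (u := a) (v := a) fun s hs => .inl ?_)
    exact e.injective (le_antisymm (hmax s hs) (hmin s hs))
  by_cases hadj : G.Adj a b
  · exact hsp.card_le_or_isContained_of_adj hS hadj
  refine .inl ?_
  by_cases hin : ∃ m, G.Adj a m ∧ G.Adj m b ∧ e m ∈ Ioo (e a) (e b)
  · obtain ⟨m, ham, hmb, hm⟩ := hin
    exact hsp.card_le_of_not_adj_of_mem_Ioo hS hadj ham hmb hm
  obtain ⟨-, h | ⟨m, ham, hmb⟩⟩ := hS ha hb hab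
  · exact (hadj h).elim
  refine hsp.card_le_of_not_adj hS hadj ham.symm hmb ?_
    fun w haw hwb hw => hin ⟨w, haw, hwb, hw⟩
  by_contra! hm
  exact hin ⟨m, ham, hmb, hm.1.lt_of_ne fun h => G.ne_of_adj ham (e.injective h),
    hm.2.lt_of_ne fun h => G.ne_of_adj hmb (e.injective h)⟩

theorem card_le_maxDeg_add_two_of_connected (e : G.BookEmbedding α) (hconn : G.Connected)
    (hS : G.square.IsClique (S : Set V)) (hC5 : ¬Nonempty (G ≃g cycleGraph 5)) :
    #S ≤ G.maxDeg + 2 := by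
  rcases e.card_le_maxDeg_add_two_or_isContained hS with h | ⟨h5, hC⟩
  · exact h
  by_contra! h
  exact hC5 (hconn.nonempty_iso_cycleGraph (by omega) hC)

end Fintype

end BookEmbedding

end SimpleGraph

/-- For a finite connected outerplanar graph `G` with maximum
degree `Δ`: if `G` is not isomorphic to `C₅` then `ω(G²) ≤ Δ + 2`; moreover for
`G = C₅` one has `ω(G²) = 5 = Δ + 3`. -/
theorem stmt13 {V : Type*} [Fintype V] (G : SimpleGraph V)
    (hout : G.IsOuterplanar) (hconn : G.Connected) :
    (¬ Nonempty (G ≃g cycleGraph 5) → G.square.cliqueNum ≤ G.maxDeg + 2) ∧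
    (Nonempty (G ≃g cycleGraph 5) →
      G.square.cliqueNum = 5 ∧ 5 = G.maxDeg + 3) := by
  obtain ⟨e⟩ := hout.nonempty_bookEmbedding
  refine ⟨fun hC5 => ?_, fun ⟨φ⟩ => ⟨cliqueNum_square_of_iso_cycleGraph_five φ, ?_⟩⟩
  · obtain ⟨S, hS⟩ := G.square.exists_isNClique_cliqueNum
    rw [← hS.card_eq]
    exact e.card_le_maxDeg_add_two_of_connected hconn hS.isClique hC5
  · have : Nonempty V := ⟨φ.symm 0⟩
    rw [maxDeg_eq_of_forall_deg_eq fun v => (φ.deg_eq v).symm.trans (cycleGraph_deg 2 (φ v))]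
end

section
/- For every N ∈ ℕ there exist n ≥ N and a finite simple graph G on n vertices that is biconnected and outerplanar, has maximum degree 5, and satisfies χ(G²) = 7. -/
open SimpleGraph

/-!
The graph is the cycle `0, 1, …, n - 1` with eight pairwise non-crossing chords inside the block
`3, …, 14`: it is outerplanar, Hamiltonian hence biconnected, and of maximum degree `5`.
A map that is injective on every closed neighbourhood properly colours the square; outside the
block `x ↦ x % 3` is such a map because `3 ∣ n`, and near the block a table of seven colours is
checked by computation. Already the square of the chorded path on `0, …, 14` needs seven colours.
-/

namespace SimpleGraph

variable {V W : Type*} {G : SimpleGraph V} {H : SimpleGraph W}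

instance [Fintype V] [DecidableEq V] [DecidableRel G.Adj] : DecidableRel G.square.Adj :=
  fun u v => inferInstanceAs (Decidable (u ≠ v ∧ (G.Adj u v ∨ ∃ w, G.Adj u w ∧ G.Adj w v)))

def Hom.square (f : G →g H) (hf : Function.Injective f) : G.square →g H.square where
  toFun := f
  map_rel' := by
    rintro u v ⟨huv, h | ⟨w, huw, hwv⟩⟩
    · exact ⟨hf.ne huv, Or.inl (f.map_adj h)⟩
    · exact ⟨hf.ne huv, Or.inr ⟨f w, f.map_adj huw, f.map_adj hwv⟩⟩

theorem exists_mem_closedNbhd_of_square_adj {u v : V} (h : G.square.Adj u v) :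
    ∃ w, u ∈ insert w (G.neighborSet w) ∧ v ∈ insert w (G.neighborSet w) := by
  obtain ⟨-, huv | ⟨w, huw, hwv⟩⟩ := h
  · exact ⟨u, Set.mem_insert u _, Or.inr huv⟩
  · exact ⟨w, Or.inr huw.symm, Or.inr hwv⟩

def Coloring.squareOfInjOn {α : Type*} (c : V → α)
    (hc : ∀ w, Set.InjOn c (insert w (G.neighborSet w))) : G.square.Coloring α :=
  Coloring.mk c fun {_ _} huv heq => by
    obtain ⟨w, hu, hv⟩ := exists_mem_closedNbhd_of_square_adj huv
    exact huv.1 (hc w hu hv heq)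

theorem biconnected_of_cyclic_succ_adj {n : ℕ} {G : SimpleGraph (Fin n)} (hn : 3 ≤ n)
    (hsucc : ∀ i j : Fin n, i.val + 1 = j.val ∨ i.val + 1 = n ∧ j.val = 0 → G.Adj i j) :
    G.Biconnected := by
  have hstep : ∀ i j : Fin n, i.val + 1 = j.val ∨ j.val + 1 = i.val ∨
      i.val + 1 = n ∧ j.val = 0 ∨ j.val + 1 = n ∧ i.val = 0 → G.Adj i j := by
    rintro i j (h | h | h | h)
    · exact hsucc i j (Or.inl h)
    · exact (hsucc j i (Or.inl h)).symm
    · exact hsucc i j (Or.inr h)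
    · exact (hsucc j i (Or.inr h)).symm
  refine ⟨by simpa using hn, ?_, fun v => ?_⟩
  · have : Nonempty (Fin n) := ⟨⟨0, by omega⟩⟩
    exact ⟨(pathGraph_preconnected n).mono fun i j h =>
      hstep i j (by rw [pathGraph_adj] at h; omega)⟩
  · -- `φ` runs once around the cycle, starting just after `v`
    let φ : Fin (n - 1) → {u : Fin n | u ≠ v} := fun i =>
      ⟨⟨if v.val + 1 + i < n then v.val + 1 + i else v.val + 1 + i - n, by split_ifs <;> omega⟩,
        fun h => by have := congrArg Fin.val h; simp only at this; split_ifs at this <;> omega⟩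
    have hφ : Function.Surjective φ := by
      rintro ⟨u, hu⟩
      have hu : u.val ≠ v.val := fun h => hu (Fin.ext h)
      refine ⟨⟨if v.val < u.val then u.val - v.val - 1 else u.val + n - v.val - 1, by
        split_ifs <;> omega⟩, ?_⟩
      simp only [φ, Subtype.mk.injEq, Fin.ext_iff]
      split_ifs <;> omega
    let f : pathGraph (n - 1) →g G.induce {u | u ≠ v} :=
      ⟨φ, fun {i j} h => by
        rw [pathGraph_adj] at h
        apply hstep
        simp only [φ, Function.Embedding.coe_subtype]
        split_ifs <;> omega⟩
    have : Nonempty {u | u ≠ v} := ⟨φ ⟨0, by omega⟩⟩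
    exact ⟨(pathGraph_preconnected _).map f hφ⟩

end SimpleGraph

def IsChord (x y : ℕ) : Prop :=
  x = 3 ∧ y = 14 ∨ x = 4 ∧ y = 6 ∨ x = 4 ∧ y = 7 ∨ x = 7 ∧ y = 9 ∨ x = 4 ∧ y = 11 ∨
    x = 7 ∧ y = 11 ∨ x = 11 ∧ y = 14 ∨ x = 12 ∧ y = 14

instance : DecidableRel IsChord := fun x y => by unfold IsChord; infer_instance

def IsPathEdge (x y : ℕ) : Prop := x + 1 = y ∨ IsChord x y

instance : DecidableRel IsPathEdge := fun x y => by unfold IsPathEdge; infer_instance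

def chordedPath (m : ℕ) : SimpleGraph (Fin m) := fromRel fun a b => IsPathEdge a b

instance (m : ℕ) : DecidableRel (chordedPath m).Adj :=
  inferInstanceAs (DecidableRel (fromRel fun a b : Fin m => IsPathEdge a b).Adj)

def chordedCycle (n : ℕ) : SimpleGraph (Fin n) :=
  fromRel fun a b => IsPathEdge a b ∨ a.val + 1 = n ∧ b.val = 0

def chordedPathHom {m n : ℕ} (h : m ≤ n) : chordedPath m →g chordedCycle n where
  toFun := Fin.castLE h
  map_rel' := fun ⟨hne, hr⟩ => ⟨(Fin.castLE_injective h).ne hne, hr.imp Or.inl Or.inl⟩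

theorem chordedCycle_isOuterplanar (n : ℕ) : (chordedCycle n).IsOuterplanar := by
  refine ⟨Fin.val, Fin.val_injective, fun a b c d hab hcd h => ?_⟩
  simp only [chordedCycle, fromRel_adj, IsPathEdge, IsChord] at hab hcd
  omega

theorem chordedCycle_biconnected {n : ℕ} (hn : 3 ≤ n) : (chordedCycle n).Biconnected :=
  biconnected_of_cyclic_succ_adj hn fun i j h =>
    ⟨fun hij => by subst hij; omega, Or.inl (h.imp Or.inl id)⟩

def chordPartners (x : ℕ) : Finset ℕ := (Finset.range 15).filter fun y => IsChord x y ∨ IsChord y x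

theorem card_chordPartners_le (x : ℕ) : (chordPartners x).card ≤ 3 := by
  by_cases hx : x < 15
  · revert x
    decide
  · rw [chordPartners, Finset.filter_false_of_mem fun y _ => by unfold IsChord; omega]
    simp

theorem chordedCycle_deg_le {n : ℕ} (v : Fin n) : (chordedCycle n).deg v ≤ 5 := by
  let cyclicNbrs : Finset ℕ :=
    {if v.val = 0 then n - 1 else v.val - 1, if v.val + 1 = n then 0 else v.val + 1}
  have hsub : Fin.val '' (chordedCycle n).neighborSet v ⊆ ↑(cyclicNbrs ∪ chordPartners v) := by
    rintro _ ⟨u, ⟨huv, hu⟩, rfl⟩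
    have hne : v.val ≠ u.val := fun h => huv (Fin.ext h)
    rw [Finset.coe_union, Set.mem_union, Finset.mem_coe, Finset.mem_coe]
    by_cases hc : IsChord v u ∨ IsChord u v
    · refine Or.inr (Finset.mem_filter.mpr ⟨Finset.mem_range.mpr ?_, hc⟩)
      unfold IsChord at hc
      omega
    · rw [not_or] at hc
      simp only [IsPathEdge, hc.1, hc.2, or_false] at hu
      have := u.isLt
      simp only [cyclicNbrs, Finset.mem_insert, Finset.mem_singleton]
      split_ifs <;> omega
  calc (chordedCycle n).deg v = (Fin.val '' (chordedCycle n).neighborSet v).ncard :=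
        (Set.ncard_image_of_injective _ Fin.val_injective).symm
    _ ≤ (cyclicNbrs ∪ chordPartners v).card := by
        rw [← Set.ncard_coe_finset]
        exact Set.ncard_le_ncard hsub (Finset.finite_toSet _)
    _ ≤ 2 + 3 :=
        (Finset.card_union_le _ _).trans (add_le_add Finset.card_le_two (card_chordPartners_le _))

theorem five_le_chordedCycle_deg {n : ℕ} (hn : 12 ≤ n) :
    5 ≤ (chordedCycle n).deg ⟨4, by omega⟩ := by
  have hsub : (({3, 5, 6, 7, 11} : Finset ℕ) : Set ℕ) ⊆
      Fin.val '' (chordedCycle n).neighborSet ⟨4, by omega⟩ := by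
    intro k hk
    simp only [Finset.coe_insert, Finset.coe_singleton, Set.mem_insert_iff,
      Set.mem_singleton_iff] at hk
    refine ⟨⟨k, by omega⟩, ?_, rfl⟩
    rcases hk with rfl | rfl | rfl | rfl | rfl <;> simp [chordedCycle, IsPathEdge, IsChord]
  calc 5 = ((({3, 5, 6, 7, 11} : Finset ℕ)) : Set ℕ).ncard := by rw [Set.ncard_coe_finset]; rfl
    _ ≤ (Fin.val '' (chordedCycle n).neighborSet ⟨4, by omega⟩).ncard :=
        Set.ncard_le_ncard hsub (Set.toFinite _)
    _ = (chordedCycle n).deg ⟨4, by omega⟩ := Set.ncard_image_of_injective _ Fin.val_injective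

theorem chordedCycle_maxDeg {n : ℕ} (hn : 12 ≤ n) : (chordedCycle n).maxDeg = 5 :=
  le_antisymm (Finset.sup_le fun v _ => chordedCycle_deg_le v)
    ((five_le_chordedCycle_deg hn).trans (Finset.le_sup (f := (chordedCycle n).deg)
      (Finset.mem_univ _)))

def sevenColor (x : ℕ) : ℕ :=
  if 3 ≤ x ∧ x ≤ 14 then [3, 1, 2, 0, 4, 3, 2, 0, 5, 2, 1, 6].getD (x - 3) 0 else x % 3

theorem sevenColor_lt_seven (x : ℕ) : sevenColor x < 7 := by
  unfold sevenColor
  split_ifs with h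
  · obtain ⟨k, hk, rfl⟩ : ∃ k < 12, x = k + 3 := ⟨x - 3, by omega, by omega⟩
    simp only [Nat.add_sub_cancel]
    interval_cases k <;> decide
  · omega

theorem sevenColor_of_not_mem_block {x : ℕ} (hx : x < 3 ∨ 14 < x) : sevenColor x = x % 3 := by
  unfold sevenColor
  rw [if_neg (by omega)]

theorem sevenColor_inj_near_block : ∀ w a b : Fin 17, 2 ≤ w.val → w.val ≤ 15 →
    (a.val = w ∨ IsPathEdge w a ∨ IsPathEdge a w) →
    (b.val = w ∨ IsPathEdge w b ∨ IsPathEdge b w) → sevenColor a = sevenColor b → a = b := by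
  decide

theorem chordedCycle_mem_closedNbhd {n : ℕ} {w v : Fin n}
    (hv : v ∈ insert w ((chordedCycle n).neighborSet w)) :
    v.val = w ∨ IsPathEdge w v ∨ IsPathEdge v w ∨ w.val + 1 = n ∧ v.val = 0 ∨
      v.val + 1 = n ∧ w.val = 0 := by
  rcases hv with rfl | ⟨-, (h | h) | (h | h)⟩ <;> tauto

theorem chordedCycle_mem_closedNbhd_near_block {n : ℕ} (hn : 17 ≤ n) {w v : Fin n}
    (hw : 2 ≤ w.val ∧ w.val ≤ 15) (hv : v ∈ insert w ((chordedCycle n).neighborSet w)) :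
    v.val < 17 ∧ (v.val = w ∨ IsPathEdge w v ∨ IsPathEdge v w) := by
  rcases chordedCycle_mem_closedNbhd hv with h | h | h | h | h
  · exact ⟨by omega, Or.inl h⟩
  · refine ⟨?_, Or.inr (Or.inl h)⟩
    unfold IsPathEdge IsChord at h
    omega
  · refine ⟨?_, Or.inr (Or.inr h)⟩
    unfold IsPathEdge IsChord at h
    omega
  all_goals omega

theorem sevenColor_injOn_closedNbhd {n : ℕ} (h3 : 3 ∣ n) (hn : 17 ≤ n) (w : Fin n) :
    Set.InjOn (fun v : Fin n => sevenColor v) (insert w ((chordedCycle n).neighborSet w)) := by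
  intro a ha b hb hab
  by_cases hw : 2 ≤ w.val ∧ w.val ≤ 15
  · obtain ⟨ha17, ha⟩ := chordedCycle_mem_closedNbhd_near_block hn hw ha
    obtain ⟨hb17, hb⟩ := chordedCycle_mem_closedNbhd_near_block hn hw hb
    exact Fin.ext (Fin.mk.inj
      (sevenColor_inj_near_block ⟨w, by omega⟩ ⟨a, ha17⟩ ⟨b, hb17⟩ hw.1 hw.2 ha hb hab))
  · replace ha := chordedCycle_mem_closedNbhd ha
    replace hb := chordedCycle_mem_closedNbhd hb
    unfold IsPathEdge IsChord at ha hb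
    simp only at hab
    rw [sevenColor_of_not_mem_block (by omega), sevenColor_of_not_mem_block (by omega)] at hab
    exact Fin.ext (by omega)

theorem colorable_seven_square_chordedCycle {n : ℕ} (h3 : 3 ∣ n) (hn : 17 ≤ n) :
    (chordedCycle n).square.Colorable 7 :=
  ⟨Coloring.squareOfInjOn (fun v => (⟨sevenColor v, sevenColor_lt_seven v⟩ : Fin 7))
    fun w _ ha _ hb h => sevenColor_injOn_closedNbhd h3 hn w ha hb (congrArg Fin.val h)⟩

set_option maxRecDepth 2000 in
/-- The six vertices of `K` form the closed neighbourhood of `4`, a clique of the square, so after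
renaming colours a `6`-colouring is the identity on `K`; the colours of `8, 9, 10, 12` are then
forced in turn, and none is left for `14`. -/
theorem not_colorable_six_square_chordedPath : ¬ (chordedPath 15).square.Colorable 6 := by
  rintro ⟨c⟩
  let K : Fin 6 → Fin 15 := ![3, 4, 5, 6, 7, 11]
  have hK : ∀ i j, i ≠ j → (chordedPath 15).square.Adj (K i) (K j) := by decide
  have hbij : Function.Bijective (c ∘ K) :=
    Finite.injective_iff_bijective.mp fun i j h => by_contra fun hij => c.valid (hK i j hij) h
  let e := Equiv.ofBijective _ hbij
  let d := e.symm ∘ c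
  have hdK : ∀ i, d (K i) = i := e.symm_apply_apply
  obtain ⟨h3, h4, h6, h7, h11⟩ : d 3 = 0 ∧ d 4 = 1 ∧ d 6 = 3 ∧ d 7 = 4 ∧ d 11 = 5 :=
    ⟨hdK 0, hdK 1, hdK 3, hdK 4, hdK 5⟩
  have hne : ∀ p ∈ ([(8, 4), (8, 6), (8, 7), (8, 11), (9, 4), (9, 6), (9, 7), (9, 8), (9, 11),
      (10, 4), (10, 7), (10, 8), (10, 9), (10, 11), (12, 3), (12, 4), (12, 7), (12, 10), (12, 11),
      (14, 3), (14, 4), (14, 7), (14, 10), (14, 11), (14, 12)] : List (Fin 15 × Fin 15)),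
      (d p.1).val ≠ (d p.2).val := by
    intro p hp hdp
    refine c.valid ?_ (e.symm.injective (Fin.ext hdp))
    clear hdp
    revert p
    decide
  simp only [List.forall_mem_cons, List.not_mem_nil, IsEmpty.forall_iff, implies_true, and_true,
    h3, h4, h6, h7, h11] at hne
  omega

theorem not_colorable_six_square_chordedCycle {n : ℕ} (hn : 15 ≤ n) :
    ¬ (chordedCycle n).square.Colorable 6 := fun h =>
  not_colorable_six_square_chordedPath
    (h.of_hom ((chordedPathHom hn).square (Fin.castLE_injective hn)))

/-- For every `N` there are `n ≥ N` and a finite simple graph `G`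
on `n` vertices that is biconnected and outerplanar, has maximum degree 5, and
satisfies `χ(G²) = 7`. -/
theorem stmt16 (N : ℕ) :
    ∃ n : ℕ, N ≤ n ∧ ∃ G : SimpleGraph (Fin n),
      G.Biconnected ∧ G.IsOuterplanar ∧ G.maxDeg = 5 ∧
      G.square.chromaticNumber = 7 := by
  refine ⟨3 * (N + 6), by omega, chordedCycle _, chordedCycle_biconnected (by omega),
    chordedCycle_isOuterplanar _, chordedCycle_maxDeg (by omega), ?_⟩
  rw [show (7 : ℕ∞) = (6 : ℕ) + 1 from rfl, chromaticNumber_eq_iff_colorable_not_colorable]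
  exact ⟨colorable_seven_square_chordedCycle (dvd_mul_right 3 _) (by omega),
    not_colorable_six_square_chordedCycle (by omega)⟩
end
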